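/- Axis of homology: Let π be a nonperspective projectivity from the range of a line l to the range of a distinct line m (nonperspective meaning π(X) ≠ X for every point X on l). Let O = l·m, V = π(O), U = π⁻¹(O); then U ≠ V, and the line h = UV is the axis of homology of π. If A and B are distinct points on l, each distinct from O, then the lines joining A to π(B) and joining B to π(A) are distinct, and their intersection point (A π(B))·(B π(A)) lies on the axis of homology h. -/

import Mathlib

open Configuration

universe u
variable (P L : Type u) [Membership P L]

/-- Three points are collinear if some line passes through all three. -/
def Col (A B C : P) : Prop := ∃ l : L, A ∈ l ∧ B ∈ l ∧ C ∈ l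

/-- Every line of `L` is incident with at least `n` distinct points. -/
def LinesHaveAtLeast (n : ℕ) : Prop :=
  ∀ l : L, ∃ s : Finset P, n ≤ s.card ∧ ∀ X ∈ s, X ∈ l

/-- The range of a line `l` : the points incident with `l`. -/
abbrev Rng (l : L) : Type _ := {X : P // X ∈ l}

/-- `f` is the perspectivity from the range of `l` to the range of `m` with
center `O`, a point outside both `l` and `m` : each point `X` of `l` is mapped
to the point `(OX)·m`, i.e. `O`, `X` and `f X` are collinear. -/
def IsPerspectivity (l m : L) (f : Rng P L l → Rng P L m) : Prop :=
  ∃ O : P, O ∉ l ∧ O ∉ m ∧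
    ∀ X : Rng P L l, ∃ k : L, O ∈ k ∧ (X : P) ∈ k ∧ ((f X : P)) ∈ k

/-- A projectivity between ranges of lines : a composite of finitely many
perspectivities. -/
inductive IsProjectivity : (l m : L) → (Rng P L l → Rng P L m) → Prop where
  | persp {l m : L} {f : Rng P L l → Rng P L m} :
      IsPerspectivity P L l m f → IsProjectivity l m f
  | comp {l m n : L} {f : Rng P L l → Rng P L m} {g : Rng P L m → Rng P L n} :
      IsProjectivity l m f → IsProjectivity m n g → IsProjectivity l n (g ∘ f)

/-- The pencil of a point `U` : the lines incident with `U`. -/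
abbrev Pcl (U : P) : Type _ := {k : L // U ∈ k}

/-- `f` is the perspectivity from the pencil of `U` to the pencil of `V` with
axis `a`, a line avoiding both `U` and `V` : each line `k` through `U` is mapped
to the line joining `V` to `k·a`, i.e. `k`, `a` and `f k` are concurrent. -/
def IsPencilPerspectivity (U V : P) (f : Pcl P L U → Pcl P L V) : Prop :=
  ∃ a : L, U ∉ a ∧ V ∉ a ∧
    ∀ k : Pcl P L U, ∃ X : P, X ∈ (k : L) ∧ X ∈ a ∧ X ∈ ((f k : L))

/-- A projectivity between pencils of points : a composite of finitely many
perspectivities between pencils. -/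
inductive IsPencilProjectivity : (U V : P) → (Pcl P L U → Pcl P L V) → Prop where
  | persp {U V : P} {f : Pcl P L U → Pcl P L V} :
      IsPencilPerspectivity P L U V f → IsPencilProjectivity U V f
  | comp {U V W : P} {f : Pcl P L U → Pcl P L V} {g : Pcl P L V → Pcl P L W} :
      IsPencilProjectivity U V f → IsPencilProjectivity V W g →
      IsPencilProjectivity U W (g ∘ f)

/-- Axiom T: every projectivity of the range of a line (or of the pencil of
lines through a point) onto itself having three distinct fixed elements is the
identity. -/
def AxiomT : Prop :=
  (∀ (l : L) (f : Rng P L l → Rng P L l), IsProjectivity P L l l f →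
    (∃ X Y Z : Rng P L l, X ≠ Y ∧ X ≠ Z ∧ Y ≠ Z ∧ f X = X ∧ f Y = Y ∧ f Z = Z) →
    ∀ W, f W = W) ∧
  (∀ (U : P) (g : Pcl P L U → Pcl P L U), IsPencilProjectivity P L U U g →
    (∃ x y z : Pcl P L U, x ≠ y ∧ x ≠ z ∧ y ≠ z ∧ g x = x ∧ g y = y ∧ g z = z) →
    ∀ w, g w = w)

/- For `A ≠ U` on `l`, put `A' = f A`. Sending a line `k` through `A'` to `A·f(k·l)`, and that
back to `A'` by the perspectivity with axis `h = UV`, is a projectivity of the pencil of `A'`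
fixing `A'U`, `m` and `A'A`; by Axiom T it is the identity. On the line `A'B` this says that
`A·f(B)` and `A'B` meet on `h`. -/

section Homology

variable {P L} [ProjectivePlane P L]

open HasLines (mkLine mkLine_ax)

theorem line_unique {A B : P} (hAB : A ≠ B) {k k' : L} (hAk : A ∈ k) (hBk : B ∈ k)
    (hAk' : A ∈ k') (hBk' : B ∈ k') : k = k' :=
  (Nondegenerate.eq_or_eq hAk hBk hAk' hBk').resolve_left hAB

theorem point_unique {k k' : L} (hkk' : k ≠ k') {X Y : P} (hXk : X ∈ k) (hYk : Y ∈ k)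
    (hXk' : X ∈ k') (hYk' : Y ∈ k') : X = Y :=
  (Nondegenerate.eq_or_eq hXk hYk hXk' hYk').resolve_right hkk'

theorem exists_line_through (A B : P) : ∃ k : L, A ∈ k ∧ B ∈ k := by
  rcases ne_or_eq A B with hAB | rfl
  · exact ⟨mkLine hAB, mkLine_ax hAB⟩
  obtain ⟨p₁, p₂, -, -, l₂, -, hp₁, -, -, hp₂, -⟩ :=
    ProjectivePlane.exists_config (P := P) (L := L)
  rcases ne_or_eq A p₁ with hA | rfl
  · exact ⟨mkLine hA, (mkLine_ax hA).1, (mkLine_ax hA).1⟩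
  · have hA : A ≠ p₂ := fun e => hp₁ (e ▸ hp₂)
    exact ⟨mkLine hA, (mkLine_ax hA).1, (mkLine_ax hA).1⟩

theorem exists_common_point (k k' : L) : ∃ X : P, X ∈ k ∧ X ∈ k' :=
  exists_line_through (P := Dual L) (L := Dual P) k k'

theorem not_mem_of_ne_inter {l m : L} (hlm : l ≠ m) {O A : P} (hOl : O ∈ l) (hOm : O ∈ m)
    (hAl : A ∈ l) (hAO : A ≠ O) : A ∉ m :=
  fun hAm => hAO (point_unique hlm hAl hOl hAm hOm)

theorem Pcl.eq_of_mem {U Z : P} {j j' : Pcl P L U} (hZU : Z ≠ U) (hZj : Z ∈ (j : L))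
    (hZj' : Z ∈ (j' : L)) : j = j' :=
  Subtype.ext (line_unique hZU hZj j.2 hZj' j'.2)

theorem IsProjectivity.injective {l m : L} {f : Rng P L l → Rng P L m}
    (hf : IsProjectivity P L l m f) : Function.Injective f := by
  induction hf with
  | @persp l m f hpersp =>
    obtain ⟨C, hCl, hCm, hcol⟩ := hpersp
    intro X Y hXY
    obtain ⟨c, hCc, hXc, hfXc⟩ := hcol X
    obtain ⟨d, hCd, hYd, hfYd⟩ := hcol Y
    have hcd : c = d :=
      line_unique (ne_of_mem_of_not_mem (f Y).2 hCm).symm hCc (hXY ▸ hfXc) hCd hfYd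
    by_contra hne
    have hcl : c = l := line_unique (fun e => hne (Subtype.ext e)) hXc (hcd ▸ hYd) X.2 Y.2
    exact hCl (hcl ▸ hCc)
  | comp _ _ ih₁ ih₂ => exact ih₂.comp ih₁

theorem exists_pencilPerspectivity {U V : P} {a : L} (hU : U ∉ a) (hV : V ∉ a) :
    ∃ τ : Pcl P L U → Pcl P L V, IsPencilPerspectivity P L U V τ ∧
      ∀ (j : Pcl P L U) (Z : P), Z ∈ (j : L) → Z ∈ a → Z ∈ (τ j : L) := by
  choose Z hZj hZa using fun j : Pcl P L U => exists_common_point (P := P) (j : L) a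
  choose τ hVτ hZτ using fun j => exists_line_through (L := L) V (Z j)
  refine ⟨fun j => ⟨τ j, hVτ j⟩, ⟨a, hU, hV, fun j => ⟨Z j, hZj j, hZa j, hZτ j⟩⟩,
    fun j Y hYj hYa => ?_⟩
  obtain rfl : Y = Z j := point_unique (ne_of_mem_of_not_mem' j.2 hU) hYj (hZj j) hYa (hZa j)
  exact hZτ j

theorem IsProjectivity.exists_pencilProjectivity {n m : L} {g : Rng P L n → Rng P L m}
    (hg : IsProjectivity P L n m g) {Q R : P} (hQ : Q ∉ n) (hR : R ∉ m) :
    ∃ σ : Pcl P L Q → Pcl P L R, IsPencilProjectivity P L Q R σ ∧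
      ∀ (j : Pcl P L Q) (X : Rng P L n), (X : P) ∈ (j : L) → (g X : P) ∈ (σ j : L) := by
  induction hg generalizing Q R with
  | @persp n m g hpersp =>
    obtain ⟨C, hCn, hCm, hcol⟩ := hpersp
    obtain ⟨τ₁, hτ₁, hτ₁mem⟩ := exists_pencilPerspectivity hQ hCn
    obtain ⟨τ₂, hτ₂, hτ₂mem⟩ := exists_pencilPerspectivity hCm hR
    refine ⟨τ₂ ∘ τ₁, .comp (.persp hτ₁) (.persp hτ₂), fun j X hXj => hτ₂mem _ _ ?_ (g X).2⟩
    obtain ⟨c, hCc, hXc, hgXc⟩ := hcol X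
    have hτ₁j : (τ₁ j : L) = c :=
      line_unique (ne_of_mem_of_not_mem X.2 hCn).symm (τ₁ j).2 (hτ₁mem j X hXj X.2) hCc hXc
    exact hτ₁j ▸ hgXc
  | @comp n p m g₁ g₂ _ _ ih₁ ih₂ =>
    obtain ⟨S, hS⟩ := Nondegenerate.exists_point (P := P) p
    obtain ⟨σ₁, hσ₁, hσ₁mem⟩ := ih₁ hQ hS
    obtain ⟨σ₂, hσ₂, hσ₂mem⟩ := ih₂ hS hR
    exact ⟨σ₂ ∘ σ₁, hσ₁.comp hσ₂, fun j X hXj => hσ₂mem _ _ (hσ₁mem j X hXj)⟩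

theorem IsProjectivity.exists_pencilProjectivity_via_axis {n m h : L}
    {g : Rng P L n → Rng P L m} (hg : IsProjectivity P L n m g) {Q R : P} (hQn : Q ∉ n)
    (hQh : Q ∉ h) (hRm : R ∉ m) (hRh : R ∉ h) :
    ∃ ρ : Pcl P L Q → Pcl P L Q, IsPencilProjectivity P L Q Q ρ ∧
      ∀ (j : Pcl P L Q) (X : Rng P L n) (c : L) (Z : P), (X : P) ∈ (j : L) → R ∈ c →
        (g X : P) ∈ c → Z ∈ c → Z ∈ h → Z ∈ (ρ j : L) := by
  obtain ⟨σ, hσ, hσmem⟩ := hg.exists_pencilProjectivity hQn hRm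
  obtain ⟨τ, hτ, hτmem⟩ := exists_pencilPerspectivity hRh hQh
  refine ⟨τ ∘ σ, hσ.comp (.persp hτ), fun j X c Z hXj hRc hgXc hZc hZh => hτmem _ Z ?_ hZh⟩
  have hσj : (σ j : L) = c :=
    line_unique (ne_of_mem_of_not_mem (g X).2 hRm).symm (σ j).2 (hσmem j X hXj) hRc hgXc
  exact hσj ▸ hZc

theorem IsProjectivity.eq_of_apply_mem {l m : L} (hlm : l ≠ m) {f : Rng P L l → Rng P L m}
    (hf : IsProjectivity P L l m f) {O : P} (hOl : O ∈ l) (hOm : O ∈ m) {U : Rng P L l}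
    (hU : f U = ⟨O, hOm⟩) {X : Rng P L l} (hX : (f X : P) ∈ l) : X = U :=
  hf.injective (hU ▸ Subtype.ext (point_unique hlm hX hOl (f X).2 hOm))

theorem inter_mem_axis (hT : AxiomT P L) {l m : L} (hlm : l ≠ m) {f : Rng P L l → Rng P L m}
    (hf : IsProjectivity P L l m f) {O : P} (hOl : O ∈ l) (hOm : O ∈ m) {U : Rng P L l}
    (hU : f U = ⟨O, hOm⟩) {h : L} (hUh : (U : P) ∈ h) (hVh : (f ⟨O, hOl⟩ : P) ∈ h)
    (hUm : (U : P) ∉ m) (hVl : (f ⟨O, hOl⟩ : P) ∉ l) {A B : Rng P L l} (hAO : (A : P) ≠ O)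
    (hAU : (A : P) ≠ U) {k k' : L} (hAk : (A : P) ∈ k) (hfBk : (f B : P) ∈ k)
    (hBk' : (B : P) ∈ k') (hfAk' : (f A : P) ∈ k') (hkk' : k ≠ k') {X : P} (hXk : X ∈ k)
    (hXk' : X ∈ k') : X ∈ h := by
  have hAm : (A : P) ∉ m := not_mem_of_ne_inter hlm hOl hOm A.2 hAO
  have hfAl : (f A : P) ∉ l := fun hfAl =>
    hAU (congrArg _ (hf.eq_of_apply_mem hlm hOl hOm hU hfAl))
  have hfAV : (f A : P) ≠ f ⟨O, hOl⟩ := fun e =>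
    hAO (congrArg Subtype.val (hf.injective (Subtype.ext e)))
  have hAh : (A : P) ∉ h := fun hAh => hVl (line_unique hAU A.2 U.2 hAh hUh ▸ hVh)
  have hfAh : (f A : P) ∉ h := fun hfAh => hUm (line_unique hfAV (f A).2 (f _).2 hfAh hVh ▸ hUh)
  obtain ⟨ρ, hρ, hρmem⟩ := hf.exists_pencilProjectivity_via_axis hfAl hfAh hAm hAh
  obtain ⟨p₁, hfAp₁, hUp₁⟩ := exists_line_through (L := L) (f A : P) U
  obtain ⟨p₃, hfAp₃, hAp₃⟩ := exists_line_through (L := L) (f A : P) A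
  obtain ⟨c₂, hAc₂, hVc₂⟩ := exists_line_through (L := L) (A : P) (f ⟨O, hOl⟩)
  obtain ⟨Z₃, hZ₃p₃, hZ₃h⟩ := exists_common_point (P := P) p₃ h
  have hid : ∀ j, ρ j = j := by
    refine hT.2 _ ρ hρ ⟨⟨p₁, hfAp₁⟩, ⟨m, (f A).2⟩, ⟨p₃, hfAp₃⟩, ?_, ?_, ?_, ?_, ?_, ?_⟩
    · exact fun e => ne_of_mem_of_not_mem' hUp₁ hUm (Subtype.mk.inj e)
    · intro e
      have hp₁l : p₁ = l := line_unique hAU (Subtype.mk.inj e ▸ hAp₃) hUp₁ A.2 U.2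
      exact hfAl (hp₁l ▸ hfAp₁)
    · exact fun e => ne_of_mem_of_not_mem' hAp₃ hAm (Subtype.mk.inj e).symm
    · exact Pcl.eq_of_mem (ne_of_mem_of_not_mem (f A).2 hUm).symm
        (hρmem _ U l U hUp₁ A.2 (by rw [hU]; exact hOl) U.2 hUh) hUp₁
    · exact Pcl.eq_of_mem hfAV.symm (hρmem _ ⟨O, hOl⟩ c₂ _ hOm hAc₂ hVc₂ hVc₂ hVh) (f _).2
    · exact Pcl.eq_of_mem (ne_of_mem_of_not_mem hZ₃h hfAh)
        (hρmem _ A p₃ Z₃ hAp₃ hAp₃ hfAp₃ hZ₃p₃ hZ₃h) hZ₃p₃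
  obtain ⟨Y, hYk, hYh⟩ := exists_common_point (P := P) k h
  have hYk' : Y ∈ k' := by
    simpa only [hid] using hρmem ⟨k', hfAk'⟩ B k Y hBk' hAk hfBk hYk hYh
  exact point_unique hkk' hXk hYk hXk' hYk' ▸ hYh

end Homology

theorem axis_of_homology
    [Configuration.ProjectivePlane P L]
    (hT : AxiomT P L)
    (l m : L) (hlm : l ≠ m)
    (f : Rng P L l → Rng P L m) (hproj : IsProjectivity P L l m f)
    (hnonpersp : ∀ X : Rng P L l, ((f X : P)) ≠ (X : P))
    (O : P) (hOl : O ∈ l) (hOm : O ∈ m)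
    (U : Rng P L l) (hU : f U = ⟨O, hOm⟩) :
    (U : P) ≠ ((f ⟨O, hOl⟩ : P)) ∧
    ∀ A B : Rng P L l, (A : P) ≠ (B : P) → (A : P) ≠ O → (B : P) ≠ O →
      (A : P) ≠ ((f B : P)) ∧ (B : P) ≠ ((f A : P)) ∧
      ∀ k k' : L, (A : P) ∈ k → ((f B : P)) ∈ k → (B : P) ∈ k' → ((f A : P)) ∈ k' →
        k ≠ k' ∧
        ∀ X : P, X ∈ k → X ∈ k' → Col P L (U : P) ((f ⟨O, hOl⟩ : P)) X := by
  have hUm : (U : P) ∉ m :=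
    not_mem_of_ne_inter hlm hOl hOm U.2 fun e => hnonpersp U (by rw [hU, e])
  have hVl : (f ⟨O, hOl⟩ : P) ∉ l := not_mem_of_ne_inter hlm.symm hOm hOl (f _).2 (hnonpersp _)
  obtain ⟨h, hUh, hVh⟩ := exists_line_through (L := L) (U : P) (f ⟨O, hOl⟩)
  refine ⟨(ne_of_mem_of_not_mem (f _).2 hUm).symm, fun A B hAB hAO hBO => ?_⟩
  have hAm := not_mem_of_ne_inter hlm hOl hOm A.2 hAO
  have hBm := not_mem_of_ne_inter hlm hOl hOm B.2 hBO
  refine ⟨(ne_of_mem_of_not_mem (f B).2 hAm).symm, (ne_of_mem_of_not_mem (f A).2 hBm).symm,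
    fun k k' hAk hfBk hBk' hfAk' => ?_⟩
  have hkk' : k ≠ k' := by
    rintro rfl
    have hkl : k = l := line_unique hAB hAk hBk' A.2 B.2
    have hAU := hproj.eq_of_apply_mem hlm hOl hOm hU (hkl ▸ hfAk')
    have hBU := hproj.eq_of_apply_mem hlm hOl hOm hU (hkl ▸ hfBk)
    exact hAB (congrArg Subtype.val (hAU.trans hBU.symm))
  refine ⟨hkk', fun X hXk hXk' => ⟨h, hUh, hVh, ?_⟩⟩
  -- `A` and `B` play symmetric roles, and at most one of them is `U`.
  rcases eq_or_ne (A : P) U with hAU | hAU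
  · exact inter_mem_axis hT hlm hproj hOl hOm hU hUh hVh hUm hVl hBO
      (fun e => hAB (hAU.trans e.symm)) hBk' hfAk' hAk hfBk hkk'.symm hXk' hXk
  · exact inter_mem_axis hT hlm hproj hOl hOm hU hUh hVh hUm hVl hAO hAU hAk hfBk hBk' hfAk'
      hkk' hXk hXk'
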